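/- arXiv:1607.07276 — 3 statements merged into one kernel-verified Lean document; each statement's English description precedes it below -/
import Mathlib

section
/- For any finite subsets F of Ĝ and any γ ∈ Ĝ, the weighted cardinality of the boundary satisfies |∂_γ̄(F)|_w ≤ d_γ² |∂_γ(F)|_w. -/
/-!
By Frobenius reciprocity every `α ∈ ∂_γ̄(F)` is reached from some `β ∈ ∂_γ(F)`, i.e.
`N^α_{β,γ} ≠ 0`, so `|∂_γ̄(F)|_w ≤ ∑_{β ∈ ∂_γ(F)} ∑_α N^α_{β,γ} d_α²`. The dimension identity
`d_β d_γ = ∑_α N^α_{β,γ} d_α` forces `d_α ≤ d_β d_γ` whenever `N^α_{β,γ} ≠ 0`, hence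
`∑_α N^α_{β,γ} d_α² ≤ (d_β d_γ)²`.
-/

/-- The boundary `∂_γ(F)` of a finite set `F ⊆ Ĝ` relative to `γ`:
`{α ∈ F : ∃ β ∉ F, N^β_{α,γ} > 0} ∪ {α ∉ F : ∃ β ∈ F, N^β_{α,γ} > 0}`. -/
def bdry {ι : Type*} (N : ι → ι → ι → ℕ) (γ : ι) (F : Finset ι) : Set ι :=
  {α | α ∈ F ∧ ∃ β ∉ F, N α γ β ≠ 0} ∪ {α | α ∉ F ∧ ∃ β ∈ F, N α γ β ≠ 0}

open Finset

lemma Finset.sum_le_sum_sum_mul_of_forall_exists_ne_zero {ι κ : Type*} (f : ι → ℕ)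
    (M : κ → ι → ℕ) {A : Finset κ} {B : Finset ι} (h : ∀ α ∈ B, ∃ β ∈ A, M β α ≠ 0) :
    ∑ α ∈ B, f α ≤ ∑ β ∈ A, ∑ α ∈ B, M β α * f α := by
  rw [sum_comm]
  refine sum_le_sum fun α hα => ?_
  obtain ⟨β, hβ, hM⟩ := h α hα
  calc f α ≤ M β α * f α := Nat.le_mul_of_pos_left _ (Nat.pos_of_ne_zero hM)
    _ ≤ ∑ β ∈ A, M β α * f α := single_le_sum (f := fun β => M β α * f α) (by simp) hβ

section Fusion

variable {ι : Type*} {N : ι → ι → ι → ℕ} {d : ι → ℕ} {β γ : ι}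

lemma sum_fusion_mul_le (hfin : {α | N β γ α ≠ 0}.Finite)
    (hdim : ∀ S : Finset ι, (∀ α, N β γ α ≠ 0 → α ∈ S) → d β * d γ = ∑ α ∈ S, N β γ α * d α)
    (B : Finset ι) : ∑ α ∈ B, N β γ α * d α ≤ d β * d γ := by
  classical
  rw [hdim (B ∪ hfin.toFinset) fun α hα => mem_union_right _ (hfin.mem_toFinset.2 hα)]
  exact sum_le_sum_of_subset subset_union_left

lemma le_mul_of_fusion_ne_zero (hfin : {α | N β γ α ≠ 0}.Finite)
    (hdim : ∀ S : Finset ι, (∀ α, N β γ α ≠ 0 → α ∈ S) → d β * d γ = ∑ α ∈ S, N β γ α * d α)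
    {α : ι} (hN : N β γ α ≠ 0) : d α ≤ d β * d γ :=
  calc d α ≤ N β γ α * d α := Nat.le_mul_of_pos_left _ (Nat.pos_of_ne_zero hN)
    _ ≤ d β * d γ := by simpa using sum_fusion_mul_le hfin hdim {α}

lemma sum_fusion_mul_sq_le (hfin : {α | N β γ α ≠ 0}.Finite)
    (hdim : ∀ S : Finset ι, (∀ α, N β γ α ≠ 0 → α ∈ S) → d β * d γ = ∑ α ∈ S, N β γ α * d α)
    (B : Finset ι) : ∑ α ∈ B, N β γ α * d α ^ 2 ≤ (d β * d γ) ^ 2 := by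
  have hterm : ∀ α, N β γ α * d α ^ 2 ≤ N β γ α * d α * (d β * d γ) := fun α => by
    rcases eq_or_ne (N β γ α) 0 with hN | hN
    · simp [hN]
    · rw [sq, ← mul_assoc]
      exact Nat.mul_le_mul_left _ (le_mul_of_fusion_ne_zero hfin hdim hN)
  calc ∑ α ∈ B, N β γ α * d α ^ 2 ≤ ∑ α ∈ B, N β γ α * d α * (d β * d γ) :=
        sum_le_sum fun α _ => hterm α
    _ = (∑ α ∈ B, N β γ α * d α) * (d β * d γ) := (sum_mul ..).symm
    _ ≤ (d β * d γ) * (d β * d γ) := Nat.mul_le_mul_right _ (sum_fusion_mul_le hfin hdim B)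
    _ = (d β * d γ) ^ 2 := (sq _).symm

end Fusion

lemma exists_mem_bdry_of_mem_bdry_conj {ι : Type*} {N : ι → ι → ι → ℕ} {conj : ι → ι}
    (hfrob : ∀ α γ β, N α (conj γ) β = N β γ α) {γ α : ι} {F : Finset ι}
    (hα : α ∈ bdry N (conj γ) F) : ∃ β ∈ bdry N γ F, N β γ α ≠ 0 := by
  rcases hα with ⟨hαF, β, hβF, hN⟩ | ⟨hαF, β, hβF, hN⟩ <;> rw [hfrob] at hN
  · exact ⟨β, Or.inr ⟨hβF, α, hαF, hN⟩, hN⟩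
  · exact ⟨β, Or.inl ⟨hβF, α, hαF, hN⟩, hN⟩

theorem stmt15_general {ι : Type*} (N : ι → ι → ι → ℕ) (d : ι → ℕ) (conj : ι → ι)
    (hfrob : ∀ α γ β, N α (conj γ) β = N β γ α)
    (hfin : ∀ α γ, {β | N α γ β ≠ 0}.Finite)
    (hdim : ∀ α γ, ∀ S : Finset ι, (∀ β, N α γ β ≠ 0 → β ∈ S) →
      d α * d γ = ∑ β ∈ S, N α γ β * d β)
    (γ : ι) (F : Finset ι)
    (h1 : (bdry N γ F).Finite) (h2 : (bdry N (conj γ) F).Finite) :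
    ∑ α ∈ h2.toFinset, (d α) ^ 2 ≤ (d γ) ^ 2 * ∑ α ∈ h1.toFinset, (d α) ^ 2 := by
  calc ∑ α ∈ h2.toFinset, d α ^ 2
      ≤ ∑ β ∈ h1.toFinset, ∑ α ∈ h2.toFinset, N β γ α * d α ^ 2 :=
        sum_le_sum_sum_mul_of_forall_exists_ne_zero _ _ fun α hα => by
          simpa using exists_mem_bdry_of_mem_bdry_conj hfrob (h2.mem_toFinset.1 hα)
    _ ≤ ∑ β ∈ h1.toFinset, (d β * d γ) ^ 2 :=
        sum_le_sum fun β _ => sum_fusion_mul_sq_le (hfin β γ) (hdim β γ) _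
    _ = d γ ^ 2 * ∑ β ∈ h1.toFinset, d β ^ 2 := by
        simp only [mul_sum, mul_pow, mul_comm]

/-- For any finite subset `F` of `Ĝ` and any `γ ∈ Ĝ`, the weighted cardinality of the
boundary satisfies `|∂_γ̄(F)|_w ≤ d_γ² |∂_γ(F)|_w`. -/
theorem stmt15 {ι : Type*} (N : ι → ι → ι → ℕ) (d : ι → ℕ) (conj : ι → ι)
    (hd : ∀ α, 0 < d α)
    (hdconj : ∀ γ, d (conj γ) = d γ)
    (hfrob : ∀ α γ β, N α (conj γ) β = N β γ α)
    (hfin : ∀ α γ, {β | N α γ β ≠ 0}.Finite)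
    (hfin' : ∀ γ β, {α | N α γ β ≠ 0}.Finite)
    (hdim : ∀ α γ, ∀ S : Finset ι, (∀ β, N α γ β ≠ 0 → β ∈ S) →
      d α * d γ = ∑ β ∈ S, N α γ β * d β)
    (γ : ι) (F : Finset ι)
    (h1 : (bdry N γ F).Finite) (h2 : (bdry N (conj γ) F).Finite) :
    ∑ α ∈ h2.toFinset, (d α) ^ 2 ≤ (d γ) ^ 2 * ∑ α ∈ h1.toFinset, (d α) ^ 2 :=
  stmt15_general N d conj hfrob hfin hdim γ F h1 h2
end

section
/- Let γ₁, γ₂ ∈ Ĝ and γ an irreducible contained in γ₁γ₂. Then for any finite subset F, |∂_{γ₁γ₂}(F)|_w ≤ max{d_{γ₁}², d_{γ₂}²} (|∂_{γ₁}(F)|_w + |∂_{γ₂}(F)|_w); consequently, if γ₁ and γ₂ both fix a sequence Σ = {F_n} (i.e., |∂_{γᵢ}(F_n)|_w / |F_n|_w → 0), then every irreducible constituent of γ₁γ₂ also fixes Σ. -/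
/-!
Every `α` in `∂_{γ₁γ₂}(F)` is linked to the other side of `F` through some `η` with
`N^η_{α,γ₁} ≠ 0` and `N^β_{η,γ₂} ≠ 0`. Either `η` already lies on the other side of `F` from `α`,
so `α ∈ ∂_{γ₁}(F)`, or `η ∈ ∂_{γ₂}(F)`. By Frobenius reciprocity and the dimension identity,
the `α` with `N^η_{α,γ₁} ≠ 0` have total dimension at most `d_η d_{γ₁}`, hence total weight at
most `d_{γ₁}² d_η²`. Constituents `γ` of `γ₁γ₂` have `∂_γ(F) ⊆ ∂_{γ₁γ₂}(F)`, so they inherit the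
vanishing of the boundary ratio.
-/

open Filter Topology

/-- The boundary `∂_{γ₁γ₂}(F)` of `F` relative to the tensor product `γ₁ γ₂`, using the
multiplicity `N^β_{α,γ₁γ₂} = ∑_η N^η_{α,γ₁} N^β_{η,γ₂}`, which is positive iff
`∃ η, N^η_{α,γ₁} > 0 ∧ N^β_{η,γ₂} > 0`. -/
def bdryProd {ι : Type*} (N : ι → ι → ι → ℕ) (γ₁ γ₂ : ι) (F : Finset ι) : Set ι :=
  {α | α ∈ F ∧ ∃ β ∉ F, ∃ η, N α γ₁ η ≠ 0 ∧ N η γ₂ β ≠ 0} ∪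
    {α | α ∉ F ∧ ∃ β ∈ F, ∃ η, N α γ₁ η ≠ 0 ∧ N η γ₂ β ≠ 0}

open Finset

namespace Finset

variable {ι κ M : Type*} [DecidableEq κ] [AddCommMonoid M] [PartialOrder M]
  [CanonicallyOrderedAdd M]

lemma sum_union_le_sum_add_sum (s t : Finset κ) (f : κ → M) :
    ∑ x ∈ s ∪ t, f x ≤ ∑ x ∈ s, f x + ∑ x ∈ t, f x := by
  rw [← sum_union_inter]
  exact le_self_add

lemma sum_biUnion_le_sum_sum (s : Finset ι) (t : ι → Finset κ) (f : κ → M) :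
    ∑ x ∈ s.biUnion t, f x ≤ ∑ i ∈ s, ∑ x ∈ t i, f x := by
  rw [← sup_eq_biUnion]
  exact apply_sup_le_sum (f := fun u => ∑ x ∈ u, f x) sum_empty
    (fun {_ _} => sum_union_le_sum_add_sum _ _ f) s

end Finset

section FusionRules

variable {ι : Type*} {N : ι → ι → ι → ℕ} {d : ι → ℕ} {conj : ι → ι}

lemma sum_dim_le_dim_mul_dim (hdconj : ∀ γ, d (conj γ) = d γ)
    (hfrob : ∀ α γ β, N α γ β = N β (conj γ) α)
    (hdim : ∀ α γ, ∀ S : Finset ι, (∀ β, N α γ β ≠ 0 → β ∈ S) →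
      d α * d γ = ∑ β ∈ S, N α γ β * d β)
    {γ η : ι} (hfin : {α | N α γ η ≠ 0}.Finite) :
    ∑ α ∈ hfin.toFinset, d α ≤ d η * d γ := by
  have hcover : ∀ α, N η (conj γ) α ≠ 0 → α ∈ hfin.toFinset := fun α hα => by
    rwa [Set.Finite.mem_toFinset, Set.mem_ofPred_eq, hfrob]
  rw [← hdconj γ, hdim η (conj γ) _ hcover]
  refine sum_le_sum fun α hα => Nat.le_mul_of_pos_left _ (Nat.pos_of_ne_zero ?_)
  rwa [Set.Finite.mem_toFinset, Set.mem_ofPred_eq, hfrob] at hα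

lemma sum_sq_dim_le_sq_mul_sq (hdconj : ∀ γ, d (conj γ) = d γ)
    (hfrob : ∀ α γ β, N α γ β = N β (conj γ) α)
    (hdim : ∀ α γ, ∀ S : Finset ι, (∀ β, N α γ β ≠ 0 → β ∈ S) →
      d α * d γ = ∑ β ∈ S, N α γ β * d β)
    {γ η : ι} (hfin : {α | N α γ η ≠ 0}.Finite) :
    ∑ α ∈ hfin.toFinset, d α ^ 2 ≤ d γ ^ 2 * d η ^ 2 :=
  calc ∑ α ∈ hfin.toFinset, d α ^ 2
      ≤ (∑ α ∈ hfin.toFinset, d α) ^ 2 := sum_sq_le_sq_sum_of_nonneg fun _ _ => Nat.zero_le _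
    _ ≤ (d η * d γ) ^ 2 := by gcongr; exact sum_dim_le_dim_mul_dim hdconj hfrob hdim hfin
    _ = d γ ^ 2 * d η ^ 2 := by ring

lemma bdryProd_subset (N : ι → ι → ι → ℕ) (γ₁ γ₂ : ι) (S : Finset ι) :
    bdryProd N γ₁ γ₂ S ⊆ bdry N γ₁ S ∪ ⋃ η ∈ bdry N γ₂ S, {α | N α γ₁ η ≠ 0} := by
  rintro α (⟨hα, β, hβ, η, h₁, h₂⟩ | ⟨hα, β, hβ, η, h₁, h₂⟩) <;> by_cases hη : η ∈ S
  · exact Or.inr (Set.mem_biUnion (Or.inl ⟨hη, β, hβ, h₂⟩) h₁)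
  · exact Or.inl (Or.inl ⟨hα, η, hη, h₁⟩)
  · exact Or.inl (Or.inr ⟨hα, η, hη, h₁⟩)
  · exact Or.inr (Set.mem_biUnion (Or.inr ⟨hη, β, hβ, h₂⟩) h₁)

lemma bdry_subset_bdryProd {γ γ₁ γ₂ : ι}
    (hγ : ∀ α β, N α γ β ≠ 0 → ∃ η, N α γ₁ η ≠ 0 ∧ N η γ₂ β ≠ 0) (S : Finset ι) :
    bdry N γ S ⊆ bdryProd N γ₁ γ₂ S := by
  rintro α (⟨hα, β, hβ, h⟩ | ⟨hα, β, hβ, h⟩)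
  · exact Or.inl ⟨hα, β, hβ, hγ α β h⟩
  · exact Or.inr ⟨hα, β, hβ, hγ α β h⟩

lemma sum_sq_bdryProd_le (hdconj : ∀ γ, d (conj γ) = d γ)
    (hfrob : ∀ α γ β, N α γ β = N β (conj γ) α)
    (hdim : ∀ α γ, ∀ S : Finset ι, (∀ β, N α γ β ≠ 0 → β ∈ S) →
      d α * d γ = ∑ β ∈ S, N α γ β * d β)
    (hfin : ∀ γ β, {α | N α γ β ≠ 0}.Finite)
    {γ₁ γ₂ : ι} (hd : 0 < d γ₁) {S : Finset ι} (hB₁ : (bdry N γ₁ S).Finite)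
    (hB₂ : (bdry N γ₂ S).Finite) (hB : (bdryProd N γ₁ γ₂ S).Finite) :
    ∑ α ∈ hB.toFinset, d α ^ 2 ≤
      max (d γ₁ ^ 2) (d γ₂ ^ 2) *
        (∑ α ∈ hB₁.toFinset, d α ^ 2 + ∑ α ∈ hB₂.toFinset, d α ^ 2) := by
  classical
  set m := max (d γ₁ ^ 2) (d γ₂ ^ 2)
  have hsub :
      hB.toFinset ⊆ hB₁.toFinset ∪ hB₂.toFinset.biUnion fun η => (hfin γ₁ η).toFinset := by
    rw [← coe_subset]
    simpa using bdryProd_subset N γ₁ γ₂ S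
  have hm : 1 ≤ m := (Nat.one_le_pow _ _ hd).trans (le_max_left _ _)
  calc ∑ α ∈ hB.toFinset, d α ^ 2
      ≤ ∑ α ∈ hB₁.toFinset, d α ^ 2
          + ∑ η ∈ hB₂.toFinset, ∑ α ∈ (hfin γ₁ η).toFinset, d α ^ 2 :=
        (sum_le_sum_of_subset hsub).trans <| (sum_union_le_sum_add_sum _ _ _).trans <|
          Nat.add_le_add_left (sum_biUnion_le_sum_sum _ _ _) _
    _ ≤ ∑ α ∈ hB₁.toFinset, d α ^ 2 + ∑ η ∈ hB₂.toFinset, d γ₁ ^ 2 * d η ^ 2 := by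
        gcongr with η
        exact sum_sq_dim_le_sq_mul_sq hdconj hfrob hdim (hfin γ₁ η)
    _ ≤ m * ∑ α ∈ hB₁.toFinset, d α ^ 2 + m * ∑ η ∈ hB₂.toFinset, d η ^ 2 := by
        rw [← mul_sum]
        gcongr
        · exact Nat.le_mul_of_pos_left _ hm
        · exact le_max_left _ _
    _ = m * (∑ α ∈ hB₁.toFinset, d α ^ 2 + ∑ α ∈ hB₂.toFinset, d α ^ 2) := (mul_add _ _ _).symm

end FusionRules

lemma tendsto_div_zero_of_le_mul_add {α : Type*} {l : Filter α} {a b c w : α → ℝ} (C : ℝ)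
    (ha : ∀ n, 0 ≤ a n) (hw : ∀ n, 0 ≤ w n) (hle : ∀ n, a n ≤ C * (b n + c n))
    (hb : Tendsto (fun n => b n / w n) l (𝓝 0)) (hc : Tendsto (fun n => c n / w n) l (𝓝 0)) :
    Tendsto (fun n => a n / w n) l (𝓝 0) := by
  have hlim : Tendsto (fun n => C * (b n / w n + c n / w n)) l (𝓝 0) := by
    simpa using (hb.add hc).const_mul C
  refine squeeze_zero (fun n => div_nonneg (ha n) (hw n)) (fun n => ?_) hlim
  rw [← add_div, ← mul_div_assoc]
  exact div_le_div_of_nonneg_right (hle n) (hw n)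

theorem stmt16_general {ι : Type*} (N : ι → ι → ι → ℕ) (d : ι → ℕ) (conj : ι → ι)
    (hd : ∀ α, 0 < d α)
    (hdconj : ∀ γ, d (conj γ) = d γ)
    (hfrob : ∀ α γ β, N α γ β = N β (conj γ) α)
    (hfin' : ∀ γ β, {α | N α γ β ≠ 0}.Finite)
    (hdim : ∀ α γ, ∀ S : Finset ι, (∀ β, N α γ β ≠ 0 → β ∈ S) →
      d α * d γ = ∑ β ∈ S, N α γ β * d β)
    (γ₁ γ₂ : ι)
    (hassoc : ∀ α β, (∃ γ, N γ₁ γ₂ γ ≠ 0 ∧ N α γ β ≠ 0) ↔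
      (∃ η, N α γ₁ η ≠ 0 ∧ N η γ₂ β ≠ 0))
    (hbfin : ∀ (γ : ι) (S : Finset ι), (bdry N γ S).Finite)
    (hbfin2 : ∀ S : Finset ι, (bdryProd N γ₁ γ₂ S).Finite)
    (F : ℕ → Finset ι) :
    (∀ S : Finset ι,
        ∑ α ∈ (hbfin2 S).toFinset, (d α) ^ 2 ≤
          max ((d γ₁) ^ 2) ((d γ₂) ^ 2) *
            (∑ α ∈ (hbfin γ₁ S).toFinset, (d α) ^ 2 +
              ∑ α ∈ (hbfin γ₂ S).toFinset, (d α) ^ 2)) ∧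
      (Tendsto (fun n => ((∑ α ∈ (hbfin γ₁ (F n)).toFinset, (d α) ^ 2 : ℕ) : ℝ) /
            ((∑ α ∈ F n, (d α) ^ 2 : ℕ) : ℝ)) atTop (𝓝 0) →
        Tendsto (fun n => ((∑ α ∈ (hbfin γ₂ (F n)).toFinset, (d α) ^ 2 : ℕ) : ℝ) /
            ((∑ α ∈ F n, (d α) ^ 2 : ℕ) : ℝ)) atTop (𝓝 0) →
        ∀ γ : ι, N γ₁ γ₂ γ ≠ 0 →
          Tendsto (fun n => ((∑ α ∈ (hbfin γ (F n)).toFinset, (d α) ^ 2 : ℕ) : ℝ) /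
            ((∑ α ∈ F n, (d α) ^ 2 : ℕ) : ℝ)) atTop (𝓝 0)) := by
  have hbound : ∀ S : Finset ι,
      ∑ α ∈ (hbfin2 S).toFinset, (d α) ^ 2 ≤ max ((d γ₁) ^ 2) ((d γ₂) ^ 2) *
        (∑ α ∈ (hbfin γ₁ S).toFinset, (d α) ^ 2 + ∑ α ∈ (hbfin γ₂ S).toFinset, (d α) ^ 2) :=
    fun S => sum_sq_bdryProd_le hdconj hfrob hdim hfin' (hd γ₁) _ _ _
  refine ⟨hbound, fun h₁ h₂ γ hγ => ?_⟩
  have hsub S := bdry_subset_bdryProd (fun α β h => (hassoc α β).mp ⟨γ, hγ, h⟩) S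
  refine tendsto_div_zero_of_le_mul_add (max (d γ₁ ^ 2) (d γ₂ ^ 2) : ℕ)
    (fun _ => Nat.cast_nonneg _) (fun _ => Nat.cast_nonneg _) (fun n => ?_) h₁ h₂
  exact_mod_cast (sum_le_sum_of_subset (Set.Finite.toFinset_subset_toFinset.mpr
    (hsub (F n)))).trans (hbound (F n))

/-- For `γ₁, γ₂ ∈ Ĝ` one has
`|∂_{γ₁γ₂}(F)|_w ≤ max{d_{γ₁}², d_{γ₂}²} (|∂_{γ₁}(F)|_w + |∂_{γ₂}(F)|_w)`;
consequently, if `γ₁` and `γ₂` both fix `Σ = {F_n}`, then every irreducible constituent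
`γ` of `γ₁ γ₂` also fixes `Σ`. -/
theorem stmt16 {ι : Type*} (N : ι → ι → ι → ℕ) (d : ι → ℕ) (conj : ι → ι)
    (hd : ∀ α, 0 < d α)
    (hdconj : ∀ γ, d (conj γ) = d γ)
    (hfrob : ∀ α γ β, N α γ β = N β (conj γ) α)
    (hfrob' : ∀ α γ β, N α γ β = N (conj α) β γ)
    (hfin : ∀ α γ, {β | N α γ β ≠ 0}.Finite)
    (hfin' : ∀ γ β, {α | N α γ β ≠ 0}.Finite)
    (hdim : ∀ α γ, ∀ S : Finset ι, (∀ β, N α γ β ≠ 0 → β ∈ S) →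
      d α * d γ = ∑ β ∈ S, N α γ β * d β)
    (γ₁ γ₂ : ι)
    (hassoc : ∀ α β, (∃ γ, N γ₁ γ₂ γ ≠ 0 ∧ N α γ β ≠ 0) ↔
      (∃ η, N α γ₁ η ≠ 0 ∧ N η γ₂ β ≠ 0))
    (hbfin : ∀ (γ : ι) (S : Finset ι), (bdry N γ S).Finite)
    (hbfin2 : ∀ S : Finset ι, (bdryProd N γ₁ γ₂ S).Finite)
    (F : ℕ → Finset ι) :
    (∀ S : Finset ι,
        ∑ α ∈ (hbfin2 S).toFinset, (d α) ^ 2 ≤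
          max ((d γ₁) ^ 2) ((d γ₂) ^ 2) *
            (∑ α ∈ (hbfin γ₁ S).toFinset, (d α) ^ 2 +
              ∑ α ∈ (hbfin γ₂ S).toFinset, (d α) ^ 2)) ∧
      (Tendsto (fun n => ((∑ α ∈ (hbfin γ₁ (F n)).toFinset, (d α) ^ 2 : ℕ) : ℝ) /
            ((∑ α ∈ F n, (d α) ^ 2 : ℕ) : ℝ)) atTop (𝓝 0) →
        Tendsto (fun n => ((∑ α ∈ (hbfin γ₂ (F n)).toFinset, (d α) ^ 2 : ℕ) : ℝ) /
            ((∑ α ∈ F n, (d α) ^ 2 : ℕ) : ℝ)) atTop (𝓝 0) →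
        ∀ γ : ι, N γ₁ γ₂ γ ≠ 0 →
          Tendsto (fun n => ((∑ α ∈ (hbfin γ (F n)).toFinset, (d α) ^ 2 : ℕ) : ℝ) /
            ((∑ α ∈ F n, (d α) ^ 2 : ℕ) : ℝ)) atTop (𝓝 0)) :=
  stmt16_general N d conj hd hdconj hfrob hfin' hdim γ₁ γ₂ hassoc hbfin hbfin2 F
end

section
/- Let π: C(𝔾) → B(H) be a representation, Σ = {F_n} a sequence of finite subsets of Ĝ, and H_Σ = {x ∈ H : π(χ(α))x = d_α x for all α ∈ ∪F_n} with orthogonal projection P. If T ∈ B(H) is a weak operator topology limit point of the averages T_n = (1/|F_n|_w) Σ_{α∈F_n} d_α π(χ(α)), then TP = PT = P. -/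
/-!
Each average `T_n` fixes `H_Σ` pointwise. So does its adjoint, since an operator of norm at most
`d` that has `x` as an eigenvector for the eigenvalue `d` has the same eigenvector for its adjoint.
Hence `T_n P = P = P T_n` for all `n`, and both relations pass to weak-operator limits.
-/

open Filter Topology ContinuousLinearMap

section

variable {𝕜 E : Type*} [RCLike 𝕜] [NormedAddCommGroup E] [InnerProductSpace 𝕜 E]

/-- Equality case of `re ⟪b x, x⟫ ≤ ‖b‖ ‖x‖²`: expanding `‖b x - c • x‖²` shows it is `≤ 0`. -/
theorem ContinuousLinearMap.apply_eq_smul_of_norm_le_of_re_inner_eq (b : E →L[𝕜] E) {c : ℝ}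
    {x : E} (hb : ‖b‖ ≤ c) (hx : RCLike.re (inner 𝕜 (b x) x) = c * ‖x‖ ^ 2) :
    b x = (c : 𝕜) • x := by
  have hc : 0 ≤ c := (norm_nonneg b).trans hb
  have hbx : ‖b x‖ ≤ c * ‖x‖ := (b.le_opNorm x).trans (by gcongr)
  have hsq : ‖b x - (c : 𝕜) • x‖ ^ 2 ≤ 0 := by
    rw [@norm_sub_sq 𝕜, inner_smul_right, RCLike.re_ofReal_mul, hx, norm_smul, RCLike.norm_ofReal,
      abs_of_nonneg hc]
    nlinarith [norm_nonneg (b x), norm_nonneg x]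
  rw [← sub_eq_zero, ← norm_eq_zero]
  exact pow_eq_zero_iff two_ne_zero |>.mp (le_antisymm hsq (by positivity))

theorem ContinuousLinearMap.adjoint_apply_eq_smul_of_apply_eq_smul [CompleteSpace E]
    (a : E →L[𝕜] E) {c : ℝ} {x : E} (ha : ‖a‖ ≤ c) (hx : a x = (c : 𝕜) • x) :
    adjoint a x = (c : 𝕜) • x := by
  refine (adjoint a).apply_eq_smul_of_norm_le_of_re_inner_eq
    (by rwa [LinearIsometryEquiv.norm_map]) ?_
  rw [adjoint_inner_left, hx, inner_smul_right, RCLike.re_ofReal_mul, inner_self_eq_norm_sq]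

end

section WeightedMean

variable {𝕜 E ι : Type*} [RCLike 𝕜] [NormedAddCommGroup E] [InnerProductSpace 𝕜 E]

/-- The mean of the `aᵢ / dᵢ` with weights `dᵢ²`. -/
noncomputable def weightedMean (s : Finset ι) (d : ι → ℕ) (a : ι → E →L[𝕜] E) : E →L[𝕜] E :=
  (∑ i ∈ s, (d i : 𝕜) ^ 2)⁻¹ • ∑ i ∈ s, (d i : 𝕜) • a i

theorem weightedMean_apply_eq_self {s : Finset ι} {d : ι → ℕ} {a : ι → E →L[𝕜] E} {x : E}
    (hs : s.Nonempty) (hd : ∀ i ∈ s, 0 < d i) (hx : ∀ i ∈ s, a i x = (d i : 𝕜) • x) :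
    weightedMean s d a x = x := by
  have hsum : (∑ i ∈ s, (d i : 𝕜) ^ 2) ≠ 0 := by
    exact_mod_cast (Finset.sum_pos (fun i hi => pow_pos (hd i hi) 2) hs).ne'
  have hterm : ∀ i ∈ s, ((d i : 𝕜) • a i) x = (d i : 𝕜) ^ 2 • x := fun i hi => by
    rw [smul_apply, hx i hi, smul_smul, sq]
  rw [weightedMean, smul_apply, sum_apply, Finset.sum_congr rfl hterm, ← Finset.sum_smul,
    smul_smul, inv_mul_cancel₀ hsum, one_smul]

theorem adjoint_weightedMean [CompleteSpace E] (s : Finset ι) (d : ι → ℕ)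
    (a : ι → E →L[𝕜] E) :
    adjoint (weightedMean s d a) = weightedMean s d fun i => adjoint (a i) := by
  simp [weightedMean, map_sum, map_smulₛₗ]

end WeightedMean

section WeakLimit

variable {𝕜 E ι : Type*} [RCLike 𝕜] [NormedAddCommGroup E] [InnerProductSpace 𝕜 E]
  {M : ι → E →L[𝕜] E} {T Q : E →L[𝕜] E} {l : Filter ι} [l.NeBot]

theorem limit_comp_eq_of_forall_comp_eq
    (hT : ∀ x y : E, Tendsto (fun n => inner 𝕜 (M n x) y) l (𝓝 (inner 𝕜 (T x) y)))
    (hM : ∀ n, M n ∘L Q = Q) : T ∘L Q = Q := by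
  ext x
  refine ext_inner_right 𝕜 fun y => tendsto_nhds_unique (hT (Q x) y) ?_
  simp [← comp_apply, hM]

theorem comp_limit_eq_of_forall_comp_eq [CompleteSpace E]
    (hT : ∀ x y : E, Tendsto (fun n => inner 𝕜 (M n x) y) l (𝓝 (inner 𝕜 (T x) y)))
    (hM : ∀ n, Q ∘L M n = Q) : Q ∘L T = Q := by
  ext x
  refine ext_inner_right 𝕜 fun y => ?_
  rw [comp_apply, ← adjoint_inner_right]
  refine tendsto_nhds_unique (hT x (adjoint Q y)) ?_
  simp [adjoint_inner_right, ← comp_apply, hM]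

end WeakLimit

theorem stmt19_general {A : Type*} [NormedRing A] [StarRing A] [NormedAlgebra ℂ A]
    {H : Type*} [NormedAddCommGroup H] [InnerProductSpace ℂ H] [CompleteSpace H]
    (π : A →⋆ₐ[ℂ] (H →L[ℂ] H))
    {Ghat : Type*} (χ : Ghat → A) (d : Ghat → ℕ)
    (hd : ∀ α, 0 < d α)
    (hnorm : ∀ α, ‖π (χ α)‖ ≤ (d α : ℝ))
    (F : ℕ → Finset Ghat) (hF : ∀ n, (F n).Nonempty)
    (T P : H →L[ℂ] H)
    (hP1 : IsSelfAdjoint P)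
    (hP2 : ∀ x : H, ∀ n, ∀ α ∈ F n, π (χ α) (P x) = (d α : ℂ) • P x)
    (l : Filter ℕ) [l.NeBot]
    (hT : ∀ x y : H,
      Tendsto
        (fun n =>
          (inner ℂ ((((∑ α ∈ F n, ((d α : ℂ)) ^ 2)⁻¹ •
            ∑ α ∈ F n, (d α : ℂ) • π (χ α)) : H →L[ℂ] H) x) y : ℂ))
        l (𝓝 (inner ℂ (T x) y : ℂ))) :
    T ∘L P = P ∧ P ∘L T = P := by
  let M n : H →L[ℂ] H := weightedMean (F n) d fun α => π (χ α)
  have hMP n : M n ∘L P = P :=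
    ext fun x => weightedMean_apply_eq_self (hF n) (fun α _ => hd α) (hP2 x n)
  have hMadjP n : adjoint (M n) ∘L P = P := by
    ext x
    rw [comp_apply, adjoint_weightedMean]
    exact weightedMean_apply_eq_self (hF n) (fun α _ => hd α) fun α hα =>
      (π (χ α)).adjoint_apply_eq_smul_of_apply_eq_smul (hnorm α) (hP2 x n α hα)
  have hPadj : adjoint P = P := by rw [← star_eq_adjoint, hP1.star_eq]
  have hPM n : P ∘L M n = P := by
    simpa only [adjoint_comp, adjoint_adjoint, hPadj] using congrArg adjoint (hMadjP n)
  exact ⟨limit_comp_eq_of_forall_comp_eq hT hMP,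
    comp_limit_eq_of_forall_comp_eq hT hPM⟩

/-- Mean ergodic theorem for discrete quantum groups: let `π : C(𝔾) → B(H)` be a unital
`*`-representation, `Σ = {F_n}` a sequence of nonempty finite subsets of `Ĝ`,
`H_Σ = {x : π(χ(α)) x = d_α x for all α ∈ ∪ F_n}` and `P` the orthogonal projection onto
`H_Σ` (characterized as the self-adjoint operator with range in `H_Σ` fixing `H_Σ`).
If `T` is a weak-operator-topology limit point of the averages
`T_n = (1/|F_n|_w) ∑_{α ∈ F_n} d_α π(χ(α))` (i.e. a limit along some nontrivial filter
`l ≤ atTop`), then `T P = P T = P`. -/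
theorem stmt19 {A : Type*} [NormedRing A] [StarRing A] [CStarRing A] [NormedAlgebra ℂ A]
    {H : Type*} [NormedAddCommGroup H] [InnerProductSpace ℂ H] [CompleteSpace H]
    (π : A →⋆ₐ[ℂ] (H →L[ℂ] H))
    {Ghat : Type*} (χ : Ghat → A) (d : Ghat → ℕ) (conj : Ghat → Ghat)
    (hd : ∀ α, 0 < d α)
    (hnorm : ∀ α, ‖π (χ α)‖ ≤ (d α : ℝ))
    (hstar : ∀ α, star (χ α) = χ (conj α))
    (hdconj : ∀ α, d (conj α) = d α)
    (F : ℕ → Finset Ghat) (hF : ∀ n, (F n).Nonempty)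
    (T P : H →L[ℂ] H)
    (hP1 : IsSelfAdjoint P)
    (hP2 : ∀ x : H, ∀ n, ∀ α ∈ F n, π (χ α) (P x) = (d α : ℂ) • P x)
    (hP3 : ∀ x : H, (∀ n, ∀ α ∈ F n, π (χ α) x = (d α : ℂ) • x) → P x = x)
    (l : Filter ℕ) (hl : l ≤ atTop) [l.NeBot]
    (hT : ∀ x y : H,
      Tendsto
        (fun n =>
          (inner ℂ ((((∑ α ∈ F n, ((d α : ℂ)) ^ 2)⁻¹ •
            ∑ α ∈ F n, (d α : ℂ) • π (χ α)) : H →L[ℂ] H) x) y : ℂ))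
        l (𝓝 (inner ℂ (T x) y : ℂ))) :
    T ∘L P = P ∧ P ∘L T = P :=
  stmt19_general π χ d hd hnorm F hF T P hP1 hP2 l hT
end
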